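/- arXiv:1403.4407 — 2 statements merged into one kernel-verified Lean document; each statement's English description precedes it below -/
import Mathlib

section
/- In Fitting's quantified logic of proofs QLP, the Justified Universal Generalization rule is admissible: if QLP_F ⊢ t:A(x), then QLP_F ⊢ (t∀x):(∀x)A(x), for any primitive term specification F. -/
/-- Justification terms of Fitting's quantified logic of proofs QLP:
variables, primitive terms `f(x₁,…,xₙ)` (a function symbol applied to
justification variables), application `·`, sum `+`, proof checker `!`, and
the uniform verifier `(t ∀ x)` (which binds `x`). -/
inductive Tm : Type
  | var : ℕ → Tm
  | prim : ℕ → List ℕ → Tm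
  | app : Tm → Tm → Tm
  | sum : Tm → Tm → Tm
  | bang : Tm → Tm
  | uall : Tm → ℕ → Tm

/-- Free justification variables of a term. -/
def Tm.fv : Tm → Finset ℕ
  | .var x => {x}
  | .prim _ xs => xs.toFinset
  | .app s t => s.fv ∪ t.fv
  | .sum s t => s.fv ∪ t.fv
  | .bang t => t.fv
  | .uall t x => t.fv.erase x

/-- Substitution of a term for a justification variable in a term. -/
def Tm.substT (s : Tm) (x : ℕ) : Tm → Tm
  | .var y => if y = x then s else .var y
  | .prim f xs => .prim f xs
  | .app a b => .app (Tm.substT s x a) (Tm.substT s x b)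
  | .sum a b => .sum (Tm.substT s x a) (Tm.substT s x b)
  | .bang a => .bang (Tm.substT s x a)
  | .uall a y => if y = x then .uall a y else .uall (Tm.substT s x a) y

/-- `FreeForT s x t`: the term `s` is substitutable ("free for") the variable
`x` in the term `t` (no variable of `s` gets captured, and `x` does not occur
inside a primitive term). -/
def FreeForT (s : Tm) (x : ℕ) : Tm → Prop
  | .var _ => True
  | .prim _ xs => x ∉ xs
  | .app a b => FreeForT s x a ∧ FreeForT s x b
  | .sum a b => FreeForT s x a ∧ FreeForT s x b
  | .bang a => FreeForT s x a
  | .uall a y => x ∈ Tm.fv (.uall a y) → (y ∉ s.fv ∧ FreeForT s x a)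

/-- Formulas of QLP, with quantifiers over justification variables. -/
inductive Fm : Type
  | atom : ℕ → Fm
  | delta : Fm
  | bot : Fm
  | imp : Fm → Fm → Fm
  | just : Tm → Fm → Fm
  | all : ℕ → Fm → Fm
  | ex : ℕ → Fm → Fm

namespace Fm

def neg (A : Fm) : Fm := imp A bot
def disj (A B : Fm) : Fm := imp (neg A) B
def conj (A B : Fm) : Fm := neg (imp A (neg B))
def iff' (A B : Fm) : Fm := conj (imp A B) (imp B A)
/-- Exclusive disjunction. -/
def xor' (A B : Fm) : Fm := conj (disj A B) (neg (conj A B))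

/-- Free justification variables of a formula. -/
def fv : Fm → Finset ℕ
  | atom _ => ∅
  | delta => ∅
  | bot => ∅
  | imp A B => A.fv ∪ B.fv
  | just t A => t.fv ∪ A.fv
  | all x A => A.fv.erase x
  | ex x A => A.fv.erase x

/-- Substitution of a term for a justification variable in a formula. -/
def subst (s : Tm) (x : ℕ) : Fm → Fm
  | atom p => atom p
  | delta => delta
  | bot => bot
  | imp A B => imp (A.subst s x) (B.subst s x)
  | just t A => just (Tm.substT s x t) (A.subst s x)
  | all y A => if y = x then all y A else all y (A.subst s x)
  | ex y A => if y = x then ex y A else ex y (A.subst s x)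

end Fm

/-- `FreeFor s x A`: the term `s` is substitutable for the variable `x` in the
formula `A`. -/
def FreeFor (s : Tm) (x : ℕ) : Fm → Prop
  | .atom _ => True
  | .delta => True
  | .bot => True
  | .imp A B => FreeFor s x A ∧ FreeFor s x B
  | .just t A => FreeForT s x t ∧ FreeFor s x A
  | .all y A => x ∈ Fm.fv (.all y A) → (y ∉ s.fv ∧ FreeFor s x A)
  | .ex y A => x ∈ Fm.fv (.ex y A) → (y ∉ s.fv ∧ FreeFor s x A)

open Fm

/-- Provability in Fitting's quantified logic of proofs QLP, extended by the
fixed point axiom `fpAx` and with axiom necessitation restricted to the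
primitive term specification `F`. Axioms: propositional tautologies (via a
Hilbert basis), quantifier axioms Q1–Q4, jK, jT, j4, Sum, and the uniformity
formula UF; rules: modus ponens MP, generalization Gen, axiom necessitation AN,
and quantified necessitation qNec. -/
inductive Prov (F : Fm → Prop) (fpAx : Fm) : Fm → Prop
  | ax1 (A B : Fm) : Prov F fpAx (imp A (imp B A))
  | ax2 (A B C : Fm) : Prov F fpAx (imp (imp A (imp B C)) (imp (imp A B) (imp A C)))
  | ax3 (A B : Fm) : Prov F fpAx (imp (imp (neg A) (neg B)) (imp B A))
  | q1 {t : Tm} {x : ℕ} {A : Fm} (h : FreeFor t x A) :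
      Prov F fpAx (imp (all x A) (A.subst t x))
  | q2 {x : ℕ} {A B : Fm} (h : x ∉ A.fv) :
      Prov F fpAx (imp (all x (imp A B)) (imp A (all x B)))
  | q3 {t : Tm} {x : ℕ} {A : Fm} (h : FreeFor t x A) :
      Prov F fpAx (imp (A.subst t x) (ex x A))
  | q4 {x : ℕ} {A B : Fm} (h : x ∉ B.fv) :
      Prov F fpAx (imp (all x (imp A B)) (imp (ex x A) B))
  | jk (s t : Tm) (A B : Fm) :
      Prov F fpAx (imp (just s (imp A B)) (imp (just t A) (just (.app s t) B)))
  | jt (t : Tm) (A : Fm) : Prov F fpAx (imp (just t A) A)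
  | j4 (t : Tm) (A : Fm) :
      Prov F fpAx (imp (just t A) (just (.bang t) (just t A)))
  | sum1 (s t : Tm) (A : Fm) : Prov F fpAx (imp (just s A) (just (.sum s t) A))
  | sum2 (s t : Tm) (A : Fm) : Prov F fpAx (imp (just s A) (just (.sum t s) A))
  | uf {y : ℕ} {t : Tm} {x : ℕ} {A : Fm} (hy1 : y ∉ t.fv) (hy2 : y ∉ A.fv) :
      Prov F fpAx (imp (ex y (just (.var y) (all x (just t A))))
        (just (.uall t x) (all x A)))
  | an {A : Fm} : F A → Prov F fpAx A
  | fp : Prov F fpAx fpAx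
  | mp {A B : Fm} : Prov F fpAx (imp A B) → Prov F fpAx A → Prov F fpAx B
  | gen {A : Fm} (x : ℕ) : Prov F fpAx A → Prov F fpAx (all x A)
  | qnec {x : ℕ} {A : Fm} (h : x ∉ A.fv) :
      Prov F fpAx A → Prov F fpAx (ex x (just (.var x) A))

/-- qNec with a fresh `y` yields the antecedent `(∃y) y:(∀x) t:A` of UF. -/
theorem Prov.just_uall_of_all_just {F : Fm → Prop} {fpAx : Fm} {t : Tm} {x : ℕ} {A : Fm}
    (h : Prov F fpAx (all x (just t A))) : Prov F fpAx (just (.uall t x) (all x A)) := by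
  obtain ⟨y, hy⟩ := Infinite.exists_notMem_finset (t.fv ∪ A.fv)
  have hyt : y ∉ t.fv := fun hy' => hy (Finset.mem_union_left _ hy')
  have hyA : y ∉ A.fv := fun hy' => hy (Finset.mem_union_right _ hy')
  have hy_all : y ∉ (all x (just t A)).fv := fun hy' => hy (Finset.mem_of_mem_erase hy')
  exact Prov.mp (Prov.uf hyt hyA) (Prov.qnec hy_all h)

/-- Admissibility of the Justified Universal Generalization rule in QLP (here
`fpAx := ⊥ → ⊥` plays no role: it is a derivable tautology, so the system is
plain QLP with primitive term specification `F`): if `QLP_F ⊢ t:A`, then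
`QLP_F ⊢ (t∀x):(∀x)A`. -/
theorem jug_admissible (F : Fm → Prop) (t : Tm) (x : ℕ) (A : Fm)
    (h : Prov F (imp bot bot) (just t A)) :
    Prov F (imp bot bot) (just (.uall t x) (all x A)) :=
  (Prov.gen x h).just_uall_of_all_just
end

section
/- In QLP extended with a fixed point constant δ and axiom δ ↔ ¬(∃x)x:δ (and no axiom necessitation, F = ∅), the system is inconsistent: ⊥ is derivable. -/
open Fm

namespace Prov

variable {F : Fm → Prop} {fpAx : Fm}

theorem imp_self (A : Fm) : Prov F fpAx (imp A A) :=
  mp (mp (ax2 A (imp A A) A) (ax1 A (imp A A))) (ax1 A A)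

theorem imp_trans {A B C : Fm} (hAB : Prov F fpAx (imp A B)) (hBC : Prov F fpAx (imp B C)) :
    Prov F fpAx (imp A C) :=
  mp (mp (ax2 A B C) (mp (ax1 (imp B C) A) hBC)) hAB

theorem imp_contract {A B : Fm} (h : Prov F fpAx (imp A (imp A B))) : Prov F fpAx (imp A B) :=
  mp (mp (ax2 A A B) h) (imp_self A)

theorem imp_neg_neg (A : Fm) : Prov F fpAx (imp A (neg (neg A))) :=
  imp_trans (ax1 A (neg A)) (mp (ax2 (neg A) A bot) (imp_self (neg A)))

theorem bot_imp (A : Fm) : Prov F fpAx (imp bot A) :=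
  mp (ax3 A bot) (mp (ax1 (neg bot) (neg A)) (imp_self bot))

theorem neg_imp (A B : Fm) : Prov F fpAx (imp (neg A) (imp A B)) :=
  mp (ax2 A bot B) (mp (ax1 (imp bot B) A) (bot_imp B))

theorem conj_left {A B : Fm} (h : Prov F fpAx (conj A B)) : Prov F fpAx A :=
  mp (mp (ax3 A (conj A B)) (imp_trans (neg_imp A (neg B)) (imp_neg_neg _))) h

theorem conj_right {A B : Fm} (h : Prov F fpAx (conj A B)) : Prov F fpAx B :=
  mp (mp (ax3 B (conj A B)) (imp_trans (ax1 (neg B) A) (imp_neg_neg _))) h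

theorem ex_just_imp {x : ℕ} {A : Fm} (hx : x ∉ A.fv) :
    Prov F fpAx (imp (ex x (just (.var x) A)) A) :=
  mp (q4 hx) (gen x (jt (.var x) A))

theorem bot_of_knower_fixpoint {x : ℕ} {D : Fm} (hx : x ∉ D.fv)
    (hD : Prov F fpAx (iff' D (neg (ex x (just (.var x) D))))) : Prov F fpAx bot := by
  set K := ex x (just (.var x) D)
  have hDK : Prov F fpAx (imp D (neg K)) := conj_left hD
  have hKD : Prov F fpAx (imp (neg K) D) := conj_right hD
  have hnotK : Prov F fpAx (neg K) := imp_contract (imp_trans (ex_just_imp hx) hDK)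
  exact mp hnotK (qnec hx (mp hKD hnotK))

end Prov

/-- The Knower Paradox in QLP: QLP extended with a fixed point constant `δ` and
the axiom `δ ↔ ¬(∃x)x:δ`, with empty primitive term specification, is
inconsistent. -/
theorem qlp_knower_inconsistent :
    Prov (fun _ => False)
      (iff' delta (neg (ex 0 (just (.var 0) delta)))) bot :=
  Prov.bot_of_knower_fixpoint (by simp [Fm.fv]) .fp
end
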